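/- Concrete polynomial-time soundness of LFPL+: suppose ℓ : L(A) ⊢ M : B where A is diamond-free. Then there exists a polynomial P : ℕ → ℕ (depending only on M) such that for any value v_ℓ : L(A) representing a list of length n, there exist a value v : B and a cost c ∈ ℕ with [ℓ ↦ v_ℓ] ⊢ M ⇓^c v and c ≤ P(n). -/
import Mathlib


/-! # LFPL⁺: syntax, values, and big-step operational cost semantics -/

/-- LFPL⁺ types: diamond, unit, sums, tensor products, linear functions,
lists, lazy products, stacks, and binary trees. -/
inductive Tp : Type
  | dia : Tp
  | unit : Tp
  | sum (A B : Tp) : Tp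
  | tens (A B : Tp) : Tp
  | arr (A B : Tp) : Tp
  | list (A : Tp) : Tp
  | prod (A B : Tp) : Tp
  | stack (A : Tp) : Tp
  | tree (A : Tp) : Tp

/-- Typing contexts: a list of declarations; `none` marks an unusable slot
(used for context splitting in the affine type system). -/
abbrev Ctx := List (Option Tp)

/-- De Bruijn variable lookup. -/
inductive Lk : Ctx → Tp → Type
  | here {A : Tp} {G : Ctx} : Lk (some A :: G) A
  | there {o : Option Tp} {A : Tp} {G : Ctx} : Lk G A → Lk (o :: G) A

/-- Splitting a context into two halves (each declared variable is usable in
exactly one half): this enforces the affine discipline. -/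
inductive Split : Ctx → Ctx → Ctx → Type
  | nil : Split [] [] []
  | skip {G G1 G2} : Split G G1 G2 → Split (none :: G) (none :: G1) (none :: G2)
  | left {A : Tp} {G G1 G2} : Split G G1 G2 → Split (some A :: G) (some A :: G1) (none :: G2)
  | right {A : Tp} {G G1 G2} : Split G G1 G2 → Split (some A :: G) (none :: G1) (some A :: G2)

/-- Intrinsically typed LFPL⁺ terms: `Term G A` are the terms `M` with
`G ⊢ M : A`.  The `cons` and `node` constructors take an extra argument of
type `◆`; the step case of the list recursor is typed in a context containing
only the diamond, head, and recursive-result variables; the base case of the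
tree recursor is typed in the empty context. -/
inductive Term : Ctx → Tp → Type
  | var {G A} : Lk G A → Term G A
  | null {G} : Term G .unit
  | inj1 {G A B} : Term G A → Term G (.sum A B)
  | inj2 {G A B} : Term G B → Term G (.sum A B)
  | scase {G G1 G2 A B C} : Split G G1 G2 → Term G1 (.sum A B) →
      Term (some A :: G2) C → Term (some B :: G2) C → Term G C
  | pair {G G1 G2 A B} : Split G G1 G2 → Term G1 A → Term G2 B → Term G (.tens A B)
  | letp {G G1 G2 A B C} : Split G G1 G2 → Term G1 (.tens A B) →
      Term (some B :: some A :: G2) C → Term G C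
  | lam {G A B} : Term (some A :: G) B → Term G (.arr A B)
  | app {G G1 G2 A B} : Split G G1 G2 → Term G1 (.arr A B) → Term G2 A → Term G B
  | nil {G A} : Term G (.list A)
  | cons {G G1 G23 G2 G3 A} : Split G G1 G23 → Split G23 G2 G3 →
      Term G1 .dia → Term G2 A → Term G3 (.list A) → Term G (.list A)
  | lrec {G G1 G2 A B} : Split G G1 G2 → Term G1 (.list A) → Term G2 B →
      Term [some B, some A, some .dia] B → Term G B
  | record {G A B} : Term G A → Term G B → Term G (.prod A B)
  | proj1 {G A B} : Term G (.prod A B) → Term G A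
  | proj2 {G A B} : Term G (.prod A B) → Term G B
  | empty {G A} : Term G (.stack A)
  | push {G G1 G2 A} : Split G G1 G2 → Term G1 A → Term G2 (.stack A) → Term G (.stack A)
  | pop {G G1 G2 A B} : Split G G1 G2 → Term G1 (.stack A) → Term G2 B →
      Term (some (.stack A) :: some A :: G2) B → Term G B
  | leaf {G A} : Term G (.tree A)
  | node {G G1 G234 G2 G34 G3 G4 A} : Split G G1 G234 → Split G234 G2 G34 →
      Split G34 G3 G4 → Term G1 .dia → Term G2 A → Term G3 (.tree A) →
      Term G4 (.tree A) → Term G (.tree A)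
  | trec {G A B} : Term G (.tree A) → Term ([] : Ctx) B →
      Term [some B, some B, some A, some .dia] B → Term G B

mutual
  /-- LFPL⁺ values (intrinsically typed), defined mutually with environments.
  Function and lazy-pair closures capture an environment; list and tree values
  store no diamond component. -/
  inductive Value : Tp → Type
    | dia : Value .dia
    | null : Value .unit
    | record {G A B} : Env G → Term G A → Term G B → Value (.prod A B)
    | inj1 {A B} : Value A → Value (.sum A B)
    | inj2 {A B} : Value B → Value (.sum A B)
    | pair {A B} : Value A → Value B → Value (.tens A B)
    | clos {G A B} : Env G → Term (some A :: G) B → Value (.arr A B)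
    | sempty {A} : Value (.stack A)
    | spush {A} : Value A → Value (.stack A) → Value (.stack A)
    | nil {A} : Value (.list A)
    | cons {A} : Value A → Value (.list A) → Value (.list A)
    | leaf {A} : Value (.tree A)
    | node {A} : Value A → Value (.tree A) → Value (.tree A) → Value (.tree A)

  /-- Environments: a value for each declared variable of the context. -/
  inductive Env : Ctx → Type
    | nil : Env []
    | cons {A G} : Value A → Env G → Env (some A :: G)
    | skip {G} : Env G → Env (none :: G)
end

/-- Environment lookup. -/
def Env.lk : {G : Ctx} → {A : Tp} → Env G → Lk G A → Value A
  | _, _, .cons v _, .here => v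
  | _, _, .cons _ V, .there l => V.lk l
  | _, _, .skip V, .there l => V.lk l

/-- First half of an environment along a context split. -/
def Env.split1 : {G G1 G2 : Ctx} → Split G G1 G2 → Env G → Env G1
  | _, _, _, .nil, _ => .nil
  | _, _, _, .skip s, .skip V => .skip (V.split1 s)
  | _, _, _, .left s, .cons v V => .cons v (V.split1 s)
  | _, _, _, .right s, .cons _ V => .skip (V.split1 s)

/-- Second half of an environment along a context split. -/
def Env.split2 : {G G1 G2 : Ctx} → Split G G1 G2 → Env G → Env G2
  | _, _, _, .nil, _ => .nil
  | _, _, _, .skip s, .skip V => .skip (V.split2 s)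
  | _, _, _, .left s, .cons _ V => .skip (V.split2 s)
  | _, _, _, .right s, .cons v V => .cons v (V.split2 s)

/-- A generic cost model: one fixed cost constant per syntactic construct. -/
structure CostModel : Type where
  kvar : ℕ
  knull : ℕ
  kinj1 : ℕ
  kinj2 : ℕ
  kcase : ℕ
  kpair : ℕ
  kletp : ℕ
  klam : ℕ
  kapp : ℕ
  knil : ℕ
  kcons : ℕ
  krec : ℕ
  krecord : ℕ
  kproj1 : ℕ
  kproj2 : ℕ
  kempty : ℕ
  kpush : ℕ
  kpop : ℕ
  kleaf : ℕ
  knode : ℕ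
  ktrec : ℕ

mutual
  /-- The big-step operational cost semantics `V ⊢ M ⇓^c v`: term `M`
  evaluates under environment `V` to value `v` with cost `c`.  Each rule adds
  the cost constant of its construct and sums the costs of its premises.  The
  step body of the list recursor is evaluated under an environment containing
  only the diamond value, the head value, and the recursive result; the step
  body of the tree recursor under only the diamond value, the label, and the
  two recursive results. -/
  inductive Evals (K : CostModel) : {G : Ctx} → {A : Tp} → Env G → Term G A → ℕ → Value A → Prop
    | var {G A} {V : Env G} (l : Lk G A) :
        Evals K V (.var l) K.kvar (V.lk l)
    | null {G} {V : Env G} : Evals K V .null K.knull .null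
    | inj1 {G A B} {V : Env G} {M : Term G A} {c v} :
        Evals K V M c v → Evals K V (.inj1 (B := B) M) (c + K.kinj1) (.inj1 v)
    | inj2 {G A B} {V : Env G} {M : Term G B} {c v} :
        Evals K V M c v → Evals K V (.inj2 (A := A) M) (c + K.kinj2) (.inj2 v)
    | case1 {G G1 G2 A B C} {V : Env G} {s : Split G G1 G2} {M : Term G1 (.sum A B)}
        {N1 : Term (some A :: G2) C} {N2 : Term (some B :: G2) C} {c c' v w} :
        Evals K (V.split1 s) M c (.inj1 v) →
        Evals K (.cons v (V.split2 s)) N1 c' w →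
        Evals K V (.scase s M N1 N2) (c + c' + K.kcase) w
    | case2 {G G1 G2 A B C} {V : Env G} {s : Split G G1 G2} {M : Term G1 (.sum A B)}
        {N1 : Term (some A :: G2) C} {N2 : Term (some B :: G2) C} {c c' v w} :
        Evals K (V.split1 s) M c (.inj2 v) →
        Evals K (.cons v (V.split2 s)) N2 c' w →
        Evals K V (.scase s M N1 N2) (c + c' + K.kcase) w
    | pair {G G1 G2 A B} {V : Env G} {s : Split G G1 G2} {M1 : Term G1 A}
        {M2 : Term G2 B} {c1 c2 v1 v2} :
        Evals K (V.split1 s) M1 c1 v1 → Evals K (V.split2 s) M2 c2 v2 →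
        Evals K V (.pair s M1 M2) (c1 + c2 + K.kpair) (.pair v1 v2)
    | letp {G G1 G2 A B C} {V : Env G} {s : Split G G1 G2} {M : Term G1 (.tens A B)}
        {N : Term (some B :: some A :: G2) C} {c c' v1 v2 w} :
        Evals K (V.split1 s) M c (.pair v1 v2) →
        Evals K (.cons v2 (.cons v1 (V.split2 s))) N c' w →
        Evals K V (.letp s M N) (c + c' + K.kletp) w
    | lam {G A B} {V : Env G} {M : Term (some A :: G) B} :
        Evals K V (.lam M) K.klam (.clos V M)
    | app {G G1 G2 G' A B} {V : Env G} {s : Split G G1 G2} {M : Term G1 (.arr A B)}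
        {N : Term G2 A} {W : Env G'} {M' : Term (some A :: G') B} {c1 c2 c3 v w} :
        Evals K (V.split1 s) M c1 (.clos W M') →
        Evals K (V.split2 s) N c2 v →
        Evals K (.cons v W) M' c3 w →
        Evals K V (.app s M N) (c1 + c2 + c3 + K.kapp) w
    | nil {G A} {V : Env G} : Evals K V (.nil (A := A)) K.knil .nil
    | cons {G G1 G23 G2 G3 A} {V : Env G} {s1 : Split G G1 G23} {s2 : Split G23 G2 G3}
        {Md : Term G1 .dia} {Mh : Term G2 A} {Mt : Term G3 (.list A)} {cd ch ct vh vt} :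
        Evals K (V.split1 s1) Md cd .dia →
        Evals K ((V.split2 s1).split1 s2) Mh ch vh →
        Evals K ((V.split2 s1).split2 s2) Mt ct vt →
        Evals K V (.cons s1 s2 Md Mh Mt) (cd + ch + ct + K.kcons) (.cons vh vt)
    | lrec {G G1 G2 A B} {V : Env G} {s : Split G G1 G2} {M : Term G1 (.list A)}
        {N1 : Term G2 B} {N2 : Term [some B, some A, some .dia] B} {c cr lv w} :
        Evals K (V.split1 s) M c lv →
        EvalsRec K (V.split2 s) N1 N2 lv cr w →
        Evals K V (.lrec s M N1 N2) (c + cr) w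
    | record {G A B} {V : Env G} {M1 : Term G A} {M2 : Term G B} :
        Evals K V (.record M1 M2) K.krecord (.record V M1 M2)
    | proj1 {G G' A B} {V : Env G} {M : Term G (.prod A B)} {W : Env G'}
        {M1 : Term G' A} {M2 : Term G' B} {c c' v} :
        Evals K V M c (.record W M1 M2) → Evals K W M1 c' v →
        Evals K V (.proj1 M) (c + c' + K.kproj1) v
    | proj2 {G G' A B} {V : Env G} {M : Term G (.prod A B)} {W : Env G'}
        {M1 : Term G' A} {M2 : Term G' B} {c c' v} :
        Evals K V M c (.record W M1 M2) → Evals K W M2 c' v →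
        Evals K V (.proj2 M) (c + c' + K.kproj2) v
    | empty {G A} {V : Env G} : Evals K V (.empty (A := A)) K.kempty .sempty
    | push {G G1 G2 A} {V : Env G} {s : Split G G1 G2} {Mh : Term G1 A}
        {Mt : Term G2 (.stack A)} {ch ct vh vt} :
        Evals K (V.split1 s) Mh ch vh → Evals K (V.split2 s) Mt ct vt →
        Evals K V (.push s Mh Mt) (ch + ct + K.kpush) (.spush vh vt)
    | pop1 {G G1 G2 A B} {V : Env G} {s : Split G G1 G2} {M : Term G1 (.stack A)}
        {N1 : Term G2 B} {N2 : Term (some (.stack A) :: some A :: G2) B} {c c' w} :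
        Evals K (V.split1 s) M c .sempty →
        Evals K (V.split2 s) N1 c' w →
        Evals K V (.pop s M N1 N2) (c + c' + K.kpop) w
    | pop2 {G G1 G2 A B} {V : Env G} {s : Split G G1 G2} {M : Term G1 (.stack A)}
        {N1 : Term G2 B} {N2 : Term (some (.stack A) :: some A :: G2) B} {c c' vh vt w} :
        Evals K (V.split1 s) M c (.spush vh vt) →
        Evals K (.cons vt (.cons vh (V.split2 s))) N2 c' w →
        Evals K V (.pop s M N1 N2) (c + c' + K.kpop) w
    | leaf {G A} {V : Env G} : Evals K V (.leaf (A := A)) K.kleaf .leaf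
    | node {G G1 G234 G2 G34 G3 G4 A} {V : Env G} {s1 : Split G G1 G234}
        {s2 : Split G234 G2 G34} {s3 : Split G34 G3 G4} {Md : Term G1 .dia}
        {Mx : Term G2 A} {Ml : Term G3 (.tree A)} {Mr : Term G4 (.tree A)}
        {cd cx cl cr vx vl vr} :
        Evals K (V.split1 s1) Md cd .dia →
        Evals K ((V.split2 s1).split1 s2) Mx cx vx →
        Evals K (((V.split2 s1).split2 s2).split1 s3) Ml cl vl →
        Evals K (((V.split2 s1).split2 s2).split2 s3) Mr cr vr →
        Evals K V (.node s1 s2 s3 Md Mx Ml Mr) (cd + cx + cl + cr + K.knode) (.node vx vl vr)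
    | trec {G A B} {V : Env G} {M : Term G (.tree A)} {N1 : Term ([] : Ctx) B}
        {N2 : Term [some B, some B, some A, some .dia] B} {c cr tv w} :
        Evals K V M c tv →
        EvalsTree K N1 N2 tv cr w →
        Evals K V (.trec M N1 N2) (c + cr) w

  /-- Iteration of the list recursor over a list value. -/
  inductive EvalsRec (K : CostModel) : {G2 : Ctx} → {A B : Tp} → Env G2 → Term G2 B →
      Term [some B, some A, some .dia] B → Value (.list A) → ℕ → Value B → Prop
    | nil {G2 A B} {V : Env G2} {N1 : Term G2 B}
        {N2 : Term [some B, some A, some .dia] B} {c w} :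
        Evals K V N1 c w → EvalsRec K V N1 N2 .nil (c + K.krec) w
    | cons {G2 A B} {V : Env G2} {N1 : Term G2 B}
        {N2 : Term [some B, some A, some .dia] B} {vh vt ct c' wt w} :
        EvalsRec K V N1 N2 vt ct wt →
        Evals K (.cons wt (.cons vh (.cons .dia .nil))) N2 c' w →
        EvalsRec K V N1 N2 (.cons vh vt) (ct + c' + K.kvar + K.krec) w

  /-- Iteration of the tree recursor over a tree value. -/
  inductive EvalsTree (K : CostModel) : {A B : Tp} → Term ([] : Ctx) B →
      Term [some B, some B, some A, some .dia] B → Value (.tree A) → ℕ → Value B → Prop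
    | leaf {A B} {N1 : Term ([] : Ctx) B}
        {N2 : Term [some B, some B, some A, some .dia] B} {c w} :
        Evals K .nil N1 c w → EvalsTree K N1 N2 (.leaf (A := A)) (c + K.ktrec) w
    | node {A B} {N1 : Term ([] : Ctx) B}
        {N2 : Term [some B, some B, some A, some .dia] B} {vx vl vr cl cr c' wl wr w} :
        EvalsTree K N1 N2 vl cl wl →
        EvalsTree K N1 N2 vr cr wr →
        Evals K (.cons wr (.cons wl (.cons vx (.cons .dia .nil)))) N2 c' w →
        EvalsTree K N1 N2 (.node vx vl vr) (cl + cr + c' + 2 * K.kvar + K.ktrec) w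
end

/-- Diamond-free types. -/
inductive DFree : Tp → Prop
  | unit : DFree .unit
  | sum {A B : Tp} : DFree A → DFree B → DFree (.sum A B)
  | tens {A B : Tp} : DFree A → DFree B → DFree (.tens A B)

/-- The length of the list represented by a value of list type. -/
def Value.listLength : {A : Tp} → Value (.list A) → ℕ
  | _, .nil => 0
  | _, .cons _ vt => vt.listLength + 1

/-! ## Potential (diamond count) -/

mutual
def phi : {T : Tp} → Value T → ℕ
  | _, .dia => 1
  | _, .null => 0
  | _, .record W _ _ => phiEnv W
  | _, .inj1 v => phi v
  | _, .inj2 v => phi v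
  | _, .pair v1 v2 => phi v1 + phi v2
  | _, .clos W _ => phiEnv W
  | _, .sempty => 0
  | _, .spush v s => phi v + phi s
  | _, .nil => 0
  | _, .cons vh vt => 1 + phi vh + phi vt
  | _, .leaf => 0
  | _, .node vx vl vr => 1 + phi vx + phi vl + phi vr

def phiEnv : {G : Ctx} → Env G → ℕ
  | _, .nil => 0
  | _, .cons v V => phi v + phiEnv V
  | _, .skip V => phiEnv V
end

theorem phi_lk : ∀ {G A} (V : Env G) (l : Lk G A), phi (V.lk l) ≤ phiEnv V
  | _, _, .cons v V, .here => by simp [Env.lk, phiEnv]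
  | _, _, .cons v V, .there l => by
      simpa [Env.lk, phiEnv] using Nat.le_add_left _ (phi v) |>.trans
        (Nat.add_le_add_left (phi_lk V l) (phi v))
  | _, _, .skip V, .there l => by simpa [Env.lk, phiEnv] using phi_lk V l

theorem phi_split : ∀ {G G1 G2} (s : Split G G1 G2) (V : Env G),
    phiEnv (V.split1 s) + phiEnv (V.split2 s) = phiEnv V
  | _, _, _, .nil, V => by cases V; simp [Env.split1, Env.split2, phiEnv]
  | _, _, _, .skip s, .skip V => by simp [Env.split1, Env.split2, phiEnv, phi_split s V]
  | _, _, _, .left s, .cons v V => by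
      simp [Env.split1, Env.split2, phiEnv, ← phi_split s V]; omega
  | _, _, _, .right s, .cons v V => by
      simp [Env.split1, Env.split2, phiEnv, ← phi_split s V]; omega

/-! ## The logical relation -/

def Good (K : CostModel) (N : ℕ) : (T : Tp) → Value T → ℕ → Prop
  | .dia, _, _ => True
  | .unit, _, _ => True
  | .sum A B, .inj1 v, k => Good K N A v k
  | .sum A B, .inj2 v, k => Good K N B v k
  | .tens A B, .pair v1 v2, k => ∃ k1 k2, k1 + k2 ≤ k ∧ Good K N A v1 k1 ∧ Good K N B v2 k2
  | .arr A B, .clos W M', k => ∀ (v : Value A) (jv : ℕ), Good K N A v jv →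
      phi v + phiEnv W ≤ N →
      ∃ (w : Value B) (c jw : ℕ), Evals K (.cons v W) M' c w ∧ Good K N B w jw ∧
        phi w ≤ phi v + phiEnv W ∧ c + jw ≤ k + jv
  | .list _, .nil, _ => True
  | .list A, .cons vh vt, k => ∃ k1 k2, k1 + k2 ≤ k ∧ Good K N A vh k1 ∧ Good K N (.list A) vt k2
  | .prod A B, .record W M1 M2, k =>
      (∃ v c jv, Evals K W M1 c v ∧ Good K N A v jv ∧ phi v ≤ phiEnv W ∧ c + jv ≤ k) ∧
      (∃ v c jv, Evals K W M2 c v ∧ Good K N B v jv ∧ phi v ≤ phiEnv W ∧ c + jv ≤ k)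
  | .stack _, .sempty, _ => True
  | .stack A, .spush vh vt, k =>
      ∃ k1 k2, k1 + k2 ≤ k ∧ Good K N A vh k1 ∧ Good K N (.stack A) vt k2
  | .tree _, .leaf, _ => True
  | .tree A, .node vx vl vr, k => ∃ k1 k2 k3, k1 + k2 + k3 ≤ k ∧ Good K N A vx k1 ∧
      Good K N (.tree A) vl k2 ∧ Good K N (.tree A) vr k3
termination_by T v _ => (sizeOf T, sizeOf v)

def GoodEnv (K : CostModel) (N : ℕ) : (G : Ctx) → Env G → ℕ → Prop
  | _, .nil, _ => True
  | (some A :: G), .cons v V, k => ∃ k1 k2, k1 + k2 ≤ k ∧ Good K N A v k1 ∧ GoodEnv K N G V k2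
  | (none :: G), .skip V, k => GoodEnv K N G V k

theorem good_mono (K : CostModel) (N : ℕ) :
    ∀ {T : Tp} (v : Value T) {k k' : ℕ}, k ≤ k' → Good K N T v k → Good K N T v k'
  | .dia, _, _, _, _, _ => by simp only [Good]
  | .unit, _, _, _, _, _ => by simp only [Good]
  | .sum A B, .inj1 v, _, _, hk, h => by
      simp only [Good] at h ⊢; exact good_mono K N v hk h
  | .sum A B, .inj2 v, _, _, hk, h => by
      simp only [Good] at h ⊢; exact good_mono K N v hk h
  | .tens A B, .pair v1 v2, _, _, hk, h => by
      simp only [Good] at h ⊢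
      obtain ⟨k1, k2, hle, h1, h2⟩ := h
      exact ⟨k1, k2, hle.trans hk, h1, h2⟩
  | .arr A B, .clos W M', _, _, hk, h => by
      simp only [Good] at h ⊢
      intro v jv hv hphi
      obtain ⟨w, c, jw, he, hw, hp, hc⟩ := h v jv hv hphi
      exact ⟨w, c, jw, he, hw, hp, hc.trans (by omega)⟩
  | .list A, .nil, _, _, hk, h => by simp only [Good]
  | .list A, .cons vh vt, _, _, hk, h => by
      simp only [Good] at h ⊢
      obtain ⟨k1, k2, hle, h1, h2⟩ := h
      exact ⟨k1, k2, hle.trans hk, h1, h2⟩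
  | .prod A B, .record W M1 M2, _, _, hk, h => by
      simp only [Good] at h ⊢
      obtain ⟨⟨v, c, jv, he, hg, hp, hc⟩, ⟨v', c', jv', he', hg', hp', hc'⟩⟩ := h
      exact ⟨⟨v, c, jv, he, hg, hp, hc.trans hk⟩, ⟨v', c', jv', he', hg', hp', hc'.trans hk⟩⟩
  | .stack A, .sempty, _, _, hk, h => by simp only [Good]
  | .stack A, .spush vh vt, _, _, hk, h => by
      simp only [Good] at h ⊢
      obtain ⟨k1, k2, hle, h1, h2⟩ := h
      exact ⟨k1, k2, hle.trans hk, h1, h2⟩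
  | .tree A, .leaf, _, _, hk, h => by simp only [Good]
  | .tree A, .node vx vl vr, _, _, hk, h => by
      simp only [Good] at h ⊢
      obtain ⟨k1, k2, k3, hle, h1, h2, h3⟩ := h
      exact ⟨k1, k2, k3, hle.trans hk, h1, h2, h3⟩

theorem goodEnv_mono (K : CostModel) (N : ℕ) :
    ∀ {G : Ctx} (V : Env G) {k k' : ℕ}, k ≤ k' → GoodEnv K N G V k → GoodEnv K N G V k'
  | _, .nil, _, _, _, _ => trivial
  | _, .cons v V, _, _, hk, h => by
      simp only [GoodEnv] at h ⊢
      obtain ⟨k1, k2, hle, h1, h2⟩ := h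
      exact ⟨k1, k2, hle.trans hk, h1, h2⟩
  | _, .skip V, _, _, hk, h => by
      simp only [GoodEnv] at h ⊢
      exact goodEnv_mono K N V hk h

theorem good_lk (K : CostModel) (N : ℕ) :
    ∀ {G A} (V : Env G) (l : Lk G A) (j : ℕ), GoodEnv K N G V j → Good K N A (V.lk l) j
  | _, _, .cons v V, .here, j, h => by
      simp only [GoodEnv] at h
      obtain ⟨k1, k2, hle, h1, h2⟩ := h
      exact good_mono K N _ (by omega) h1
  | _, _, .cons v V, .there l, j, h => by
      simp only [GoodEnv] at h
      obtain ⟨k1, k2, hle, h1, h2⟩ := h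
      exact good_lk K N V l j (goodEnv_mono K N V (by omega) h2)
  | _, _, .skip V, .there l, j, h => by
      simp only [GoodEnv] at h
      exact good_lk K N V l j h

theorem goodEnv_split (K : CostModel) (N : ℕ) :
    ∀ {G G1 G2} (s : Split G G1 G2) (V : Env G) (j : ℕ), GoodEnv K N G V j →
      ∃ j1 j2, j1 + j2 ≤ j ∧ GoodEnv K N G1 (V.split1 s) j1 ∧ GoodEnv K N G2 (V.split2 s) j2
  | _, _, _, .nil, V, j, h => ⟨0, 0, by omega, trivial, trivial⟩
  | _, _, _, .skip s, .skip V, j, h => by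
      simp only [GoodEnv] at h
      obtain ⟨j1, j2, hle, h1, h2⟩ := goodEnv_split K N s V j h
      exact ⟨j1, j2, hle, h1, h2⟩
  | _, _, _, .left s, .cons v V, j, h => by
      simp only [GoodEnv] at h
      obtain ⟨k1, k2, hle, hv, hV⟩ := h
      obtain ⟨j1, j2, hle2, h1, h2⟩ := goodEnv_split K N s V k2 hV
      exact ⟨k1 + j1, j2, by omega, ⟨k1, j1, le_refl _, hv, h1⟩, h2⟩
  | _, _, _, .right s, .cons v V, j, h => by
      simp only [GoodEnv] at h
      obtain ⟨k1, k2, hle, hv, hV⟩ := h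
      obtain ⟨j1, j2, hle2, h1, h2⟩ := goodEnv_split K N s V k2 hV
      exact ⟨j1, k1 + j2, by omega, h1, ⟨k1, j2, le_refl _, hv, h2⟩⟩

/-! ## Recursor helper lemmas -/

theorem lrecAux (K : CostModel) (N : ℕ) {A B : Tp} {G2 : Ctx}
    (N1 : Term G2 B) (N2 : Term [some B, some A, some .dia] B) (q1 q2 : ℕ)
    (H1 : ∀ (V : Env G2) (j : ℕ), GoodEnv K N G2 V j → phiEnv V ≤ N →
      ∃ v c jv, Evals K V N1 c v ∧ Good K N B v jv ∧ phi v ≤ phiEnv V ∧ c + jv ≤ j + q1)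
    (H2 : ∀ (V : Env [some B, some A, some .dia]) (j : ℕ),
      GoodEnv K N [some B, some A, some .dia] V j → phiEnv V ≤ N →
      ∃ v c jv, Evals K V N2 c v ∧ Good K N B v jv ∧ phi v ≤ phiEnv V ∧ c + jv ≤ j + q2) :
    ∀ (lv : Value (.list A)) (V : Env G2) (j jl : ℕ), GoodEnv K N G2 V j →
      Good K N (.list A) lv jl → phiEnv V + phi lv ≤ N →
      ∃ w c jw, EvalsRec K V N1 N2 lv c w ∧ Good K N B w jw ∧
        phi w ≤ phiEnv V + phi lv ∧
        c + jw ≤ j + jl + q1 + phi lv * (q2 + K.kvar + K.krec) + K.krec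
  | .nil, V, j, jl, hV, hl, hphi => by
      obtain ⟨w, c, jw, he, hg, hp, hc⟩ := H1 V j hV (by simpa [phi] using hphi)
      exact ⟨w, c + K.krec, jw, .nil he, hg, by simp [phi] at *; omega, by omega⟩
  | .cons vh vt, V, j, jl, hV, hl, hphi => by
      simp only [Good] at hl
      obtain ⟨k1, k2, hk, hh, ht⟩ := hl
      have hphit : phiEnv V + phi vt ≤ N := by simp [phi] at hphi ⊢; omega
      obtain ⟨wt, ct, jwt, het, hgt, hpt, hct⟩ :=
        lrecAux K N N1 N2 q1 q2 H1 H2 vt V j k2 hV ht hphit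
      -- step environment
      have hres := H2 (.cons wt (.cons vh (.cons .dia .nil))) (jwt + k1)
        ⟨jwt, k1, le_refl _, hgt, k1, 0, by omega, hh, by
          exact ⟨0, 0, by omega, (by simp only [Good]), trivial⟩⟩
        (by simp [phiEnv, phi] at *; omega)
      obtain ⟨w, c', jw, he, hg, hp, hc⟩ := hres
      refine ⟨w, ct + c' + K.kvar + K.krec, jw, .cons het he, hg, ?_, ?_⟩
      · simp [phiEnv, phi] at hp ⊢; omega
      · simp [phi] at *; nlinarith [hp, hc, hct]

theorem trecAux (K : CostModel) (N : ℕ) {A B : Tp}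
    (N1 : Term ([] : Ctx) B) (N2 : Term [some B, some B, some A, some .dia] B) (q1 q2 : ℕ)
    (H1 : ∀ (V : Env []) (j : ℕ), GoodEnv K N [] V j → phiEnv V ≤ N →
      ∃ v c jv, Evals K V N1 c v ∧ Good K N B v jv ∧ phi v ≤ phiEnv V ∧ c + jv ≤ j + q1)
    (H2 : ∀ (V : Env [some B, some B, some A, some .dia]) (j : ℕ),
      GoodEnv K N [some B, some B, some A, some .dia] V j → phiEnv V ≤ N →
      ∃ v c jv, Evals K V N2 c v ∧ Good K N B v jv ∧ phi v ≤ phiEnv V ∧ c + jv ≤ j + q2) :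
    ∀ (tv : Value (.tree A)) (jt : ℕ), Good K N (.tree A) tv jt → phi tv ≤ N →
      ∃ w c jw, EvalsTree K N1 N2 tv c w ∧ Good K N B w jw ∧ phi w ≤ phi tv ∧
        c + jw ≤ jt + (phi tv + 1) * (q1 + K.ktrec) +
          phi tv * (q2 + 2 * K.kvar + K.ktrec)
  | .leaf, jt, hg, hphi => by
      obtain ⟨w, c, jw, he, hgw, hp, hc⟩ := H1 .nil 0 trivial (by simp [phiEnv])
      exact ⟨w, c + K.ktrec, jw, .leaf he, hgw, by simp [phi, phiEnv] at *; omega,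
        by simp [phi] at *; omega⟩
  | .node vx vl vr, jt, hg, hphi => by
      simp only [Good] at hg
      obtain ⟨k1, k2, k3, hk, hx, hl, hr⟩ := hg
      have hphil : phi vl ≤ N := by simp [phi] at hphi ⊢; omega
      have hphir : phi vr ≤ N := by simp [phi] at hphi ⊢; omega
      obtain ⟨wl, cl, jwl, hel, hgl, hpl, hcl⟩ := trecAux K N N1 N2 q1 q2 H1 H2 vl k2 hl hphil
      obtain ⟨wr, cr, jwr, her, hgr, hpr, hcr⟩ := trecAux K N N1 N2 q1 q2 H1 H2 vr k3 hr hphir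
      have hres := H2 (.cons wr (.cons wl (.cons vx (.cons .dia .nil)))) (jwr + jwl + k1)
        ⟨jwr, jwl + k1, by omega, hgr, jwl, k1, le_refl _, hgl, k1, 0, by omega, hx,
          ⟨0, 0, by omega, (by simp only [Good]), trivial⟩⟩
        (by simp [phiEnv, phi] at *; omega)
      obtain ⟨w, c', jw, he, hgw, hp, hc⟩ := hres
      refine ⟨w, cl + cr + c' + 2 * K.kvar + K.ktrec, jw, .node hel her he, hgw, ?_, ?_⟩
      · simp [phiEnv, phi] at hp ⊢; omega
      · simp [phi] at *; nlinarith [hp, hc, hcl, hcr]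

/-! ## The fundamental lemma -/

open Polynomial in
theorem FTLR (K : CostModel) : ∀ {G : Ctx} {T : Tp} (M : Term G T),
    ∃ p : Polynomial ℕ, ∀ (N : ℕ) (V : Env G) (j : ℕ), GoodEnv K N G V j → phiEnv V ≤ N →
      ∃ v c jv, Evals K V M c v ∧ Good K N T v jv ∧ phi v ≤ phiEnv V ∧
        c + jv ≤ j + p.eval N := by
  intro G T M
  induction M with
  | var l =>
      refine ⟨C K.kvar, fun N V j hV hφ => ⟨V.lk l, K.kvar, j, .var l,
        good_lk K N V l j hV, phi_lk V l, by simp; omega⟩⟩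
  | null =>
      exact ⟨C K.knull, fun N V j hV hφ => ⟨.null, K.knull, 0, .null,
        by simp only [Good], by simp [phi], by simp⟩⟩
  | inj1 M ih =>
      obtain ⟨p1, h1⟩ := ih
      refine ⟨p1 + C K.kinj1, fun N V j hV hφ => ?_⟩
      obtain ⟨v, c, jv, he, hg, hp, hc⟩ := h1 N V j hV hφ
      exact ⟨.inj1 v, c + K.kinj1, jv, .inj1 he, by simp only [Good]; exact hg,
        by simpa [phi] using hp, by simp; omega⟩
  | inj2 M ih =>
      obtain ⟨p1, h1⟩ := ih
      refine ⟨p1 + C K.kinj2, fun N V j hV hφ => ?_⟩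
      obtain ⟨v, c, jv, he, hg, hp, hc⟩ := h1 N V j hV hφ
      exact ⟨.inj2 v, c + K.kinj2, jv, .inj2 he, by simp only [Good]; exact hg,
        by simpa [phi] using hp, by simp; omega⟩
  | scase s M N1 N2 ihM ih1 ih2 =>
      obtain ⟨pM, hM⟩ := ihM; obtain ⟨p1, h1⟩ := ih1; obtain ⟨p2, h2⟩ := ih2
      refine ⟨pM + p1 + p2 + C K.kcase, fun N V j hV hφ => ?_⟩
      obtain ⟨j1, j2, hj, hV1, hV2⟩ := goodEnv_split K N s V j hV
      have hsp := phi_split s V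
      obtain ⟨v, c, jv, he, hg, hp, hc⟩ := hM N (V.split1 s) j1 hV1 (by omega)
      cases v with
      | inj1 v =>
          simp only [Good] at hg
          simp only [phi] at hp
          obtain ⟨w, c', jw, he', hg', hp', hc'⟩ := h1 N (.cons v (V.split2 s)) (jv + j2)
            ⟨jv, j2, le_refl _, hg, hV2⟩ (by simp [phiEnv]; omega)
          refine ⟨w, c + c' + K.kcase, jw, .case1 he he', hg', ?_, ?_⟩
          · simp [phiEnv] at hp'; omega
          · simp; omega
      | inj2 v =>
          simp only [Good] at hg
          simp only [phi] at hp
          obtain ⟨w, c', jw, he', hg', hp', hc'⟩ := h2 N (.cons v (V.split2 s)) (jv + j2)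
            ⟨jv, j2, le_refl _, hg, hV2⟩ (by simp [phiEnv]; omega)
          refine ⟨w, c + c' + K.kcase, jw, .case2 he he', hg', ?_, ?_⟩
          · simp [phiEnv] at hp'; omega
          · simp; omega
  | pair s M1 M2 ih1 ih2 =>
      obtain ⟨p1, h1⟩ := ih1; obtain ⟨p2, h2⟩ := ih2
      refine ⟨p1 + p2 + C K.kpair, fun N V j hV hφ => ?_⟩
      obtain ⟨j1, j2, hj, hV1, hV2⟩ := goodEnv_split K N s V j hV
      have hsp := phi_split s V
      obtain ⟨v1, c1, jv1, he1, hg1, hp1, hc1⟩ := h1 N (V.split1 s) j1 hV1 (by omega)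
      obtain ⟨v2, c2, jv2, he2, hg2, hp2, hc2⟩ := h2 N (V.split2 s) j2 hV2 (by omega)
      refine ⟨.pair v1 v2, c1 + c2 + K.kpair, jv1 + jv2, .pair he1 he2,
        (by simp only [Good]; exact ⟨jv1, jv2, le_refl _, hg1, hg2⟩), by simp [phi]; omega, by simp; omega⟩
  | letp s M Nb ihM ihN =>
      obtain ⟨pM, hM⟩ := ihM; obtain ⟨pN, hN⟩ := ihN
      refine ⟨pM + pN + C K.kletp, fun N V j hV hφ => ?_⟩
      obtain ⟨j1, j2, hj, hV1, hV2⟩ := goodEnv_split K N s V j hV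
      have hsp := phi_split s V
      obtain ⟨v, c, jv, he, hg, hp, hc⟩ := hM N (V.split1 s) j1 hV1 (by omega)
      cases v with
      | pair v1 v2 =>
          simp only [Good] at hg
          obtain ⟨k1, k2, hk, hg1, hg2⟩ := hg
          simp only [phi] at hp
          obtain ⟨w, c', jw, he', hg', hp', hc'⟩ := hN N (.cons v2 (.cons v1 (V.split2 s)))
            (jv + j2) ⟨k2, k1 + j2, by omega, hg2, ⟨k1, j2, le_refl _, hg1, hV2⟩⟩
            (by simp [phiEnv]; omega)
          refine ⟨w, c + c' + K.kletp, jw, .letp he he', hg', ?_, ?_⟩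
          · simp [phiEnv] at hp'; omega
          · simp; omega
  | lam M ih =>
      obtain ⟨p1, h1⟩ := ih
      refine ⟨p1 + C K.klam, fun N V j hV hφ => ?_⟩
      refine ⟨.clos V M, K.klam, j + p1.eval N, .lam, ?_, by simp [phi], by simp; omega⟩
      simp only [Good]
      intro v jv hv hφ'
      obtain ⟨w, c, jw, he, hg, hp, hc⟩ := h1 N (.cons v V) (jv + j)
        ⟨jv, j, le_refl _, hv, hV⟩ (by simpa [phiEnv] using hφ')
      exact ⟨w, c, jw, he, hg, by simpa [phiEnv] using hp, by omega⟩
  | app s M1 M2 ih1 ih2 =>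
      obtain ⟨p1, h1⟩ := ih1; obtain ⟨p2, h2⟩ := ih2
      refine ⟨p1 + p2 + C K.kapp, fun N V j hV hφ => ?_⟩
      obtain ⟨j1, j2, hj, hV1, hV2⟩ := goodEnv_split K N s V j hV
      have hsp := phi_split s V
      obtain ⟨f, c1, k, he1, hgf, hpf, hc1⟩ := h1 N (V.split1 s) j1 hV1 (by omega)
      obtain ⟨v, c2, jv, he2, hgv, hpv, hc2⟩ := h2 N (V.split2 s) j2 hV2 (by omega)
      cases f with
      | clos W M' =>
          simp only [Good] at hgf
          simp only [phi] at hpf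
          obtain ⟨w, c3, jw, he3, hg3, hp3, hc3⟩ := hgf v jv hgv (by omega)
          refine ⟨w, c1 + c2 + c3 + K.kapp, jw, .app he1 he2 he3, hg3, by omega,
            by simp; omega⟩
  | nil =>
      exact ⟨C K.knil, fun N V j hV hφ => ⟨.nil, K.knil, 0, .nil,
        by simp only [Good], by simp [phi], by simp⟩⟩
  | cons s1 s2 Md Mh Mt ihd ihh iht =>
      obtain ⟨pd, hd⟩ := ihd; obtain ⟨ph, hh⟩ := ihh; obtain ⟨pt, ht⟩ := iht
      refine ⟨pd + ph + pt + C K.kcons, fun N V j hV hφ => ?_⟩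
      obtain ⟨j1, j23, hj, hV1, hV23⟩ := goodEnv_split K N s1 V j hV
      obtain ⟨j2, j3, hj2, hV2, hV3⟩ := goodEnv_split K N s2 _ j23 hV23
      have hsp1 := phi_split s1 V
      have hsp2 := phi_split s2 (V.split2 s1)
      obtain ⟨vd, cd, jd, hed, hgd, hpd, hcd⟩ := hd N (V.split1 s1) j1 hV1 (by omega)
      cases vd with
      | dia =>
          simp only [phi] at hpd
          obtain ⟨vh, ch, jvh, heh, hgh, hph, hch⟩ := hh N _ j2 hV2 (by omega)
          obtain ⟨vt, ct, jvt, het, hgt, hpt, hct⟩ := ht N _ j3 hV3 (by omega)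
          refine ⟨.cons vh vt, cd + ch + ct + K.kcons, jvh + jvt, .cons hed heh het,
            (by simp only [Good]; exact ⟨jvh, jvt, le_refl _, hgh, hgt⟩), by simp [phi]; omega, by simp; omega⟩
  | lrec s M N1 N2 ihM ih1 ih2 =>
      obtain ⟨pM, hM⟩ := ihM; obtain ⟨p1, h1⟩ := ih1; obtain ⟨p2, h2⟩ := ih2
      refine ⟨pM + p1 + X * (p2 + C (K.kvar + K.krec)) + C K.krec,
        fun N V j hV hφ => ?_⟩
      obtain ⟨j1, j2, hj, hV1, hV2⟩ := goodEnv_split K N s V j hV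
      have hsp := phi_split s V
      obtain ⟨lv, c, jl, he, hg, hp, hc⟩ := hM N (V.split1 s) j1 hV1 (by omega)
      obtain ⟨w, cr, jw, her, hgw, hpw, hcw⟩ := lrecAux K N N1 N2 (p1.eval N) (p2.eval N)
        (fun V' j' hV' hφ' => h1 N V' j' hV' hφ')
        (fun V' j' hV' hφ' => h2 N V' j' hV' hφ')
        lv (V.split2 s) j2 jl hV2 hg (by omega)
      refine ⟨w, c + cr, jw, .lrec he her, hgw, by omega, ?_⟩
      have hlvN : phi lv ≤ N := by omega
      have : phi lv * (p2.eval N + K.kvar + K.krec) ≤ N * (p2.eval N + K.kvar + K.krec) :=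
        Nat.mul_le_mul_right _ hlvN
      simp; nlinarith
  | record M1 M2 ih1 ih2 =>
      obtain ⟨p1, h1⟩ := ih1; obtain ⟨p2, h2⟩ := ih2
      refine ⟨p1 + p2 + C K.krecord, fun N V j hV hφ => ?_⟩
      refine ⟨.record V M1 M2, K.krecord, j + p1.eval N + p2.eval N, .record, ?_,
        by simp [phi], by simp; omega⟩
      simp only [Good]
      constructor
      · obtain ⟨v, c, jv, he, hg, hp, hc⟩ := h1 N V j hV hφ
        exact ⟨v, c, jv, he, hg, hp, by omega⟩
      · obtain ⟨v, c, jv, he, hg, hp, hc⟩ := h2 N V j hV hφ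
        exact ⟨v, c, jv, he, hg, hp, by omega⟩
  | proj1 M ih =>
      obtain ⟨pM, hM⟩ := ih
      refine ⟨pM + C K.kproj1, fun N V j hV hφ => ?_⟩
      obtain ⟨v, c, jv, he, hg, hp, hc⟩ := hM N V j hV hφ
      cases v with
      | record W M1 M2 =>
          simp only [Good] at hg
          simp only [phi] at hp
          obtain ⟨⟨w, c', jw, he', hg', hp', hc'⟩, _⟩ := hg
          exact ⟨w, c + c' + K.kproj1, jw, .proj1 he he', hg', by omega, by simp; omega⟩
  | proj2 M ih =>
      obtain ⟨pM, hM⟩ := ih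
      refine ⟨pM + C K.kproj2, fun N V j hV hφ => ?_⟩
      obtain ⟨v, c, jv, he, hg, hp, hc⟩ := hM N V j hV hφ
      cases v with
      | record W M1 M2 =>
          simp only [Good] at hg
          simp only [phi] at hp
          obtain ⟨_, ⟨w, c', jw, he', hg', hp', hc'⟩⟩ := hg
          exact ⟨w, c + c' + K.kproj2, jw, .proj2 he he', hg', by omega, by simp; omega⟩
  | empty =>
      exact ⟨C K.kempty, fun N V j hV hφ => ⟨.sempty, K.kempty, 0, .empty,
        by simp only [Good], by simp [phi], by simp⟩⟩
  | push s M1 M2 ih1 ih2 =>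
      obtain ⟨p1, h1⟩ := ih1; obtain ⟨p2, h2⟩ := ih2
      refine ⟨p1 + p2 + C K.kpush, fun N V j hV hφ => ?_⟩
      obtain ⟨j1, j2, hj, hV1, hV2⟩ := goodEnv_split K N s V j hV
      have hsp := phi_split s V
      obtain ⟨v1, c1, jv1, he1, hg1, hp1, hc1⟩ := h1 N (V.split1 s) j1 hV1 (by omega)
      obtain ⟨v2, c2, jv2, he2, hg2, hp2, hc2⟩ := h2 N (V.split2 s) j2 hV2 (by omega)
      refine ⟨.spush v1 v2, c1 + c2 + K.kpush, jv1 + jv2, .push he1 he2,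
        (by simp only [Good]; exact ⟨jv1, jv2, le_refl _, hg1, hg2⟩), by simp [phi]; omega, by simp; omega⟩
  | pop s M N1 N2 ihM ih1 ih2 =>
      obtain ⟨pM, hM⟩ := ihM; obtain ⟨p1, h1⟩ := ih1; obtain ⟨p2, h2⟩ := ih2
      refine ⟨pM + p1 + p2 + C K.kpop, fun N V j hV hφ => ?_⟩
      obtain ⟨j1, j2, hj, hV1, hV2⟩ := goodEnv_split K N s V j hV
      have hsp := phi_split s V
      obtain ⟨v, c, jv, he, hg, hp, hc⟩ := hM N (V.split1 s) j1 hV1 (by omega)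
      cases v with
      | sempty =>
          obtain ⟨w, c', jw, he', hg', hp', hc'⟩ := h1 N (V.split2 s) j2 hV2 (by omega)
          exact ⟨w, c + c' + K.kpop, jw, .pop1 he he', hg', by omega, by simp; omega⟩
      | spush vh vt =>
          simp only [Good] at hg
          obtain ⟨k1, k2, hk, hg1, hg2⟩ := hg
          simp only [phi] at hp
          obtain ⟨w, c', jw, he', hg', hp', hc'⟩ := h2 N (.cons vt (.cons vh (V.split2 s)))
            (jv + j2) ⟨k2, k1 + j2, by omega, hg2, ⟨k1, j2, le_refl _, hg1, hV2⟩⟩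
            (by simp [phiEnv]; omega)
          refine ⟨w, c + c' + K.kpop, jw, .pop2 he he', hg', ?_, ?_⟩
          · simp [phiEnv] at hp'; omega
          · simp; omega
  | leaf =>
      exact ⟨C K.kleaf, fun N V j hV hφ => ⟨.leaf, K.kleaf, 0, .leaf,
        by simp only [Good], by simp [phi], by simp⟩⟩
  | node s1 s2 s3 Md Mx Ml Mr ihd ihx ihl ihr =>
      obtain ⟨pd, hd⟩ := ihd; obtain ⟨px, hx⟩ := ihx
      obtain ⟨pl, hl⟩ := ihl; obtain ⟨pr, hr⟩ := ihr
      refine ⟨pd + px + pl + pr + C K.knode, fun N V j hV hφ => ?_⟩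
      obtain ⟨j1, j234, hj, hV1, hV234⟩ := goodEnv_split K N s1 V j hV
      obtain ⟨j2, j34, hj2, hV2, hV34⟩ := goodEnv_split K N s2 _ j234 hV234
      obtain ⟨j3, j4, hj3, hV3, hV4⟩ := goodEnv_split K N s3 _ j34 hV34
      have hsp1 := phi_split s1 V
      have hsp2 := phi_split s2 (V.split2 s1)
      have hsp3 := phi_split s3 ((V.split2 s1).split2 s2)
      obtain ⟨vd, cd, jd, hed, hgd, hpd, hcd⟩ := hd N (V.split1 s1) j1 hV1 (by omega)
      cases vd with
      | dia =>
          simp only [phi] at hpd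
          obtain ⟨vx, cx, jx, hex, hgx, hpx, hcx⟩ := hx N _ j2 hV2 (by omega)
          obtain ⟨vl, cl, jvl, hel, hgl, hpl, hcl⟩ := hl N _ j3 hV3 (by omega)
          obtain ⟨vr, cr, jvr, her, hgr, hpr, hcr⟩ := hr N _ j4 hV4 (by omega)
          refine ⟨.node vx vl vr, cd + cx + cl + cr + K.knode, jx + jvl + jvr,
            .node hed hex hel her, (by simp only [Good]; exact ⟨jx, jvl, jvr, le_refl _, hgx, hgl, hgr⟩),
            by simp [phi]; omega, by simp; omega⟩
  | trec M N1 N2 ihM ih1 ih2 =>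
      obtain ⟨pM, hM⟩ := ihM; obtain ⟨p1, h1⟩ := ih1; obtain ⟨p2, h2⟩ := ih2
      refine ⟨pM + (X + 1) * (p1 + C K.ktrec) + X * (p2 + C (2 * K.kvar + K.ktrec)),
        fun N V j hV hφ => ?_⟩
      obtain ⟨tv, c, jt, he, hg, hp, hc⟩ := hM N V j hV hφ
      obtain ⟨w, cr, jw, her, hgw, hpw, hcw⟩ := trecAux K N N1 N2 (p1.eval N) (p2.eval N)
        (fun V' j' hV' hφ' => h1 N V' j' hV' hφ')
        (fun V' j' hV' hφ' => h2 N V' j' hV' hφ')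
        tv jt hg (by omega)
      refine ⟨w, c + cr, jw, .trec he her, hgw, by omega, ?_⟩
      have htvN : phi tv ≤ N := by omega
      have h1' : (phi tv + 1) * (p1.eval N + K.ktrec) ≤ (N + 1) * (p1.eval N + K.ktrec) :=
        Nat.mul_le_mul_right _ (by omega)
      have h2' : phi tv * (p2.eval N + 2 * K.kvar + K.ktrec) ≤
          N * (p2.eval N + 2 * K.kvar + K.ktrec) := Nat.mul_le_mul_right _ htvN
      simp; nlinarith

/-! ## Diamond-free values -/

theorem dfree_good {A : Tp} (hA : DFree A) :
    ∃ cA : ℕ, ∀ v : Value A, phi v ≤ cA ∧ ∀ (K : CostModel) (N : ℕ), Good K N A v 0 := by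
  induction hA with
  | unit =>
      refine ⟨0, fun v => ?_⟩
      cases v with
      | null => exact ⟨by simp [phi], fun K N => by simp only [Good]⟩
  | sum hA hB ihA ihB =>
      obtain ⟨cA, hA'⟩ := ihA; obtain ⟨cB, hB'⟩ := ihB
      refine ⟨max cA cB, fun v => ?_⟩
      cases v with
      | inj1 v =>
          obtain ⟨h1, h2⟩ := hA' v
          exact ⟨by simp [phi]; omega, fun K N => by simp only [Good]; exact h2 K N⟩
      | inj2 v =>
          obtain ⟨h1, h2⟩ := hB' v
          exact ⟨by simp [phi]; omega, fun K N => by simp only [Good]; exact h2 K N⟩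
  | tens hA hB ihA ihB =>
      obtain ⟨cA, hA'⟩ := ihA; obtain ⟨cB, hB'⟩ := ihB
      refine ⟨cA + cB, fun v => ?_⟩
      cases v with
      | pair v1 v2 =>
          obtain ⟨h1, h2⟩ := hA' v1
          obtain ⟨h1', h2'⟩ := hB' v2
          exact ⟨by simp [phi]; omega, fun K N => by
            simp only [Good]; exact ⟨0, 0, by omega, h2 K N, h2' K N⟩⟩

theorem dfree_list {A : Tp} (cA : ℕ)
    (h : ∀ v : Value A, phi v ≤ cA ∧ ∀ (K : CostModel) (N : ℕ), Good K N A v 0) :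
    ∀ vl : Value (.list A), phi vl ≤ (cA + 1) * vl.listLength ∧
      ∀ (K : CostModel) (N : ℕ), Good K N (.list A) vl 0
  | .nil => ⟨by simp [phi, Value.listLength], fun K N => by simp only [Good]⟩
  | .cons vh vt => by
      obtain ⟨h1, h2⟩ := dfree_list cA h vt
      obtain ⟨h1', h2'⟩ := h vh
      constructor
      · simp [phi, Value.listLength, Nat.mul_succ]; omega
      · intro K N
        simp only [Good]
        exact ⟨0, 0, by omega, h2' K N, h2 K N⟩

/-- **Concrete polynomial-time soundness of LFPL⁺**: if `ℓ : L(A) ⊢ M : B`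
with `A` diamond-free, then there is a polynomial `P : ℕ → ℕ` (depending only
on `M`) such that for any value `v_ℓ : L(A)` representing a list of length
`n`, there are a value `v : B` and a cost `c` with `[ℓ ↦ v_ℓ] ⊢ M ⇓^c v` and
`c ≤ P(n)`. -/
theorem concrete_polytime_soundness (K : CostModel) {A B : Tp} (hA : DFree A)
    (M : Term [some (.list A)] B) :
    ∃ P : Polynomial ℕ, ∀ (n : ℕ) (vl : Value (.list A)), vl.listLength = n →
      ∃ (v : Value B) (c : ℕ),
        Evals K (.cons vl .nil) M c v ∧ c ≤ P.eval n := by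
  obtain ⟨cA, hcA⟩ := dfree_good hA
  obtain ⟨p, hp⟩ := FTLR K M
  refine ⟨p.comp (Polynomial.C (cA + 1) * Polynomial.X), fun n vl hn => ?_⟩
  obtain ⟨hφ, hG⟩ := dfree_list cA hcA vl
  set N := (cA + 1) * n with hN
  have hφ' : phiEnv (Env.cons vl Env.nil) ≤ N := by
    simp only [phiEnv]
    subst hn
    omega
  obtain ⟨v, c, jv, he, hg, hpv, hc⟩ := hp N (.cons vl .nil) 0
    ⟨0, 0, le_refl _, hG K N, trivial⟩ hφ'
  refine ⟨v, c, he, ?_⟩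
  have : (p.comp (Polynomial.C (cA + 1) * Polynomial.X)).eval n = p.eval N := by
    simp [Polynomial.eval_comp, hN]
  omega
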